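/- arXiv:1109.0832 — 2 statements merged into one kernel-verified Lean document; each statement's English description precedes it below -/
import Mathlib

section
/- Fix 1/2 < p ≤ 1. There exists a finite constant C = C(p) > 0 such that for every k ∈ ℕ the operator norm (with respect to the Euclidean norm on ℝ^k) of the matrix H_k satisfies ‖H_k‖₂ ≤ C. -/
open MeasureTheory Filter Finset Matrix
open scoped ENNReal
noncomputable section

/-- The matrix `H_k` : diagonal entries `4(2p−1)/p` and off-diagonal entries
`−(2(2p−1)²/p²)·((1−p)/p)^{|i−j|−1}`. -/
def Hmat (p : ℝ) (k : ℕ) : Matrix (Fin k) (Fin k) ℝ := fun i j =>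
  if i = j then 4 * (2 * p - 1) / p
  else -(2 * (2 * p - 1) ^ 2 / p ^ 2) * ((1 - p) / p) ^ (((i : ℤ) - (j : ℤ)).natAbs - 1)

/-- Schur test: the Euclidean operator norm of a real matrix is bounded by a common
bound on the row and column `ℓ¹` sums. -/
lemma schur_test {k : ℕ} (A : Matrix (Fin k) (Fin k) ℝ) (C : ℝ) (hC : 0 ≤ C)
    (hrow : ∀ i, ∑ j, |A i j| ≤ C) (hcol : ∀ j, ∑ i, |A i j| ≤ C) :
    ‖LinearMap.toContinuousLinearMap (Matrix.toEuclideanLin A)‖ ≤ C := by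
  apply ContinuousLinearMap.opNorm_le_bound _ hC
  intro x
  rw [EuclideanSpace.norm_eq, EuclideanSpace.norm_eq]
  rw [show (C * Real.sqrt (∑ j, ‖x j‖ ^ 2)) = Real.sqrt (C ^ 2 * ∑ j, ‖x j‖ ^ 2) by
    rw [Real.sqrt_mul (sq_nonneg C), Real.sqrt_sq hC]]
  apply Real.sqrt_le_sqrt
  have key : ∀ i : Fin k, ‖(LinearMap.toContinuousLinearMap (Matrix.toEuclideanLin A)) x i‖ ^ 2
      ≤ C * ∑ j, |A i j| * x j ^ 2 := by
    intro i
    have hx : (LinearMap.toContinuousLinearMap (Matrix.toEuclideanLin A)) x i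
        = ∑ j, A i j * x j := by
      simp [Matrix.toEuclideanLin_apply, Matrix.mulVec, dotProduct]
    rw [hx, Real.norm_eq_abs, sq_abs]
    calc (∑ j, A i j * x j) ^ 2 ≤ (∑ j, |A i j| * |x j|) ^ 2 := by
          rw [← sq_abs]
          apply pow_le_pow_left₀ (abs_nonneg _)
          refine (Finset.abs_sum_le_sum_abs _ _).trans ?_
          simp [abs_mul, le_refl]
        _ ≤ (∑ j, |A i j|) * ∑ j, |A i j| * x j ^ 2 := by
          apply Finset.sum_sq_le_sum_mul_sum_of_sq_eq_mul
          · intro j _; exact abs_nonneg _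
          · intro j _; positivity
          · intro j _; rw [mul_pow, sq_abs (x j)]; ring
        _ ≤ C * ∑ j, |A i j| * x j ^ 2 := by
          apply mul_le_mul_of_nonneg_right (hrow i)
          apply Finset.sum_nonneg; intro j _; positivity
  calc ∑ i, ‖(LinearMap.toContinuousLinearMap (Matrix.toEuclideanLin A)) x i‖ ^ 2
      ≤ ∑ i, C * ∑ j, |A i j| * x j ^ 2 := Finset.sum_le_sum fun i _ => key i
    _ = C * ∑ j, (∑ i, |A i j|) * x j ^ 2 := by
        rw [← Finset.mul_sum, Finset.sum_comm]
        simp_rw [Finset.sum_mul]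
    _ ≤ C * ∑ j, C * x j ^ 2 := by
        apply mul_le_mul_of_nonneg_left _ hC
        apply Finset.sum_le_sum
        intro j _
        exact mul_le_mul_of_nonneg_right (hcol j) (sq_nonneg _)
    _ = C ^ 2 * ∑ j, ‖x j‖ ^ 2 := by
        rw [← Finset.mul_sum]
        simp [Real.norm_eq_abs, sq_abs]
        ring

/-- The row sums of `Hmat` are uniformly bounded. -/
lemma Hmat_row_sum_le (p : ℝ) (hp : 1 / 2 < p) (hp1 : p ≤ 1) (k : ℕ) (i : Fin k) :
    ∑ j, |Hmat p k i j| ≤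
      4 * (2 * p - 1) / p + 2 * (2 * (2 * p - 1) ^ 2 / p ^ 2) * (1 - (1 - p) / p)⁻¹ := by
  have hp0 : 0 < p := lt_trans (by norm_num) hp
  set q : ℝ := (1 - p) / p with hq
  have hq0 : 0 ≤ q := div_nonneg (by linarith) hp0.le
  have hq1 : q < 1 := by
    rw [div_lt_one hp0]; linarith
  set c : ℝ := 2 * (2 * p - 1) ^ 2 / p ^ 2 with hc
  have hc0 : 0 ≤ c := by positivity
  have ha0 : 0 ≤ 4 * (2 * p - 1) / p := by
    apply div_nonneg _ hp0.le; linarith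
  have hsummable : Summable (fun d : ℕ => q ^ d) :=
    summable_geometric_of_lt_one hq0 hq1
  have htsum : ∑' d : ℕ, q ^ d = (1 - q)⁻¹ := tsum_geometric_of_lt_one hq0 hq1
  -- sum over a set of j's all different from i, on which the exponent map is injective
  have hpart : ∀ s : Finset (Fin k), (∀ j ∈ s, j ≠ i) →
      (Set.InjOn (fun j : Fin k => (((i : ℤ) - (j : ℤ)).natAbs - 1)) s) →
      ∑ j ∈ s, |Hmat p k i j| ≤ c * (1 - q)⁻¹ := by
    intro s hs hinj
    have : ∑ j ∈ s, |Hmat p k i j| = ∑ j ∈ s, c * q ^ (((i : ℤ) - (j : ℤ)).natAbs - 1) := by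
      apply Finset.sum_congr rfl
      intro j hj
      rw [Hmat, if_neg (Ne.symm (hs j hj)), abs_mul, abs_neg, abs_of_nonneg hc0,
        abs_of_nonneg (pow_nonneg hq0 _)]
    rw [this, ← Finset.mul_sum]
    apply mul_le_mul_of_nonneg_left _ hc0
    rw [← Finset.sum_image hinj]
    calc ∑ d ∈ s.image (fun j : Fin k => (((i : ℤ) - (j : ℤ)).natAbs - 1)), q ^ d
        ≤ ∑' d : ℕ, q ^ d := Summable.sum_le_tsum _ (fun d _ => pow_nonneg hq0 d) hsummable
      _ = (1 - q)⁻¹ := htsum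
  -- split the sum
  have hsplit : ∑ j, |Hmat p k i j| = |Hmat p k i i|
      + ∑ j ∈ Finset.univ.filter (· < i), |Hmat p k i j|
      + ∑ j ∈ Finset.univ.filter (i < ·), |Hmat p k i j| := by
    have h1 : (Finset.univ : Finset (Fin k)) =
        insert i (Finset.univ.filter (· < i) ∪ Finset.univ.filter (i < ·)) := by
      ext j
      simp only [Finset.mem_insert, Finset.mem_union, Finset.mem_filter, Finset.mem_univ,
        true_and, true_iff]
      rcases lt_trichotomy j i with h | h | h
      · exact Or.inr (Or.inl h)
      · exact Or.inl h
      · exact Or.inr (Or.inr h)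
    conv_lhs => rw [h1]
    rw [Finset.sum_insert, Finset.sum_union]
    · ring
    · rw [Finset.disjoint_filter]
      intro j _ hj hj'
      exact absurd (hj.trans hj') (lt_irrefl j)
    · simp only [Finset.mem_union, Finset.mem_filter, Finset.mem_univ, true_and]
      rintro (h | h) <;> exact absurd h (lt_irrefl i)
  have hdiag : |Hmat p k i i| = 4 * (2 * p - 1) / p := by
    rw [Hmat, if_pos rfl, abs_of_nonneg ha0]
  have hlt : ∑ j ∈ Finset.univ.filter (· < i), |Hmat p k i j| ≤ c * (1 - q)⁻¹ := by
    apply hpart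
    · intro j hj
      simp only [Finset.mem_filter] at hj
      exact ne_of_lt hj.2
    · intro j1 h1 j2 h2 heq
      simp only [Finset.coe_filter, Set.mem_setOf_eq, Finset.mem_univ, true_and] at h1 h2
      simp only at heq
      have hj1 : (j1 : ℕ) < (i : ℕ) := h1
      have hj2 : (j2 : ℕ) < (i : ℕ) := h2
      have : (j1 : ℕ) = (j2 : ℕ) := by omega
      exact Fin.ext this
  have hgt : ∑ j ∈ Finset.univ.filter (i < ·), |Hmat p k i j| ≤ c * (1 - q)⁻¹ := by
    apply hpart
    · intro j hj
      simp only [Finset.mem_filter] at hj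
      exact (ne_of_lt hj.2).symm
    · intro j1 h1 j2 h2 heq
      simp only [Finset.coe_filter, Set.mem_setOf_eq, Finset.mem_univ, true_and] at h1 h2
      simp only at heq
      have hj1 : (i : ℕ) < (j1 : ℕ) := h1
      have hj2 : (i : ℕ) < (j2 : ℕ) := h2
      have : (j1 : ℕ) = (j2 : ℕ) := by omega
      exact Fin.ext this
  rw [hsplit, hdiag]
  have : 2 * c * (1 - q)⁻¹ = c * (1 - q)⁻¹ + c * (1 - q)⁻¹ := by ring
  rw [hc] at this ⊢
  linarith [hlt, hgt]

/-- `Hmat` is symmetric in the sense that `|Hmat i j| = |Hmat j i|`. -/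
lemma Hmat_symm (p : ℝ) (k : ℕ) (i j : Fin k) : Hmat p k i j = Hmat p k j i := by
  unfold Hmat
  rcases eq_or_ne i j with h | h
  · rw [h]
  · rw [if_neg h, if_neg (Ne.symm h), ← Int.natAbs_neg ((i : ℤ) - (j : ℤ)), neg_sub]

/-- There is a finite constant `C = C(p) > 0` bounding, uniformly in `k`, the operator
norm of `H_k` with respect to the Euclidean norm. -/
theorem Hmat_opNorm_uniform_bound (p : ℝ) (hp : 1 / 2 < p) (hp1 : p ≤ 1) :
    ∃ C : ℝ, 0 < C ∧ ∀ k : ℕ,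
      ‖LinearMap.toContinuousLinearMap (Matrix.toEuclideanLin (Hmat p k))‖ ≤ C := by
  have hp0 : 0 < p := lt_trans (by norm_num) hp
  set B : ℝ := 4 * (2 * p - 1) / p + 2 * (2 * (2 * p - 1) ^ 2 / p ^ 2) * (1 - (1 - p) / p)⁻¹
    with hB
  have hq1 : (1 - p) / p < 1 := by rw [div_lt_one hp0]; linarith
  have hq0 : 0 ≤ (1 - p) / p := div_nonneg (by linarith) hp0.le
  have hB0 : 0 ≤ B := by
    apply add_nonneg
    · apply div_nonneg _ hp0.le; linarith
    · apply mul_nonneg (by positivity)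
      rw [inv_nonneg]; linarith
  refine ⟨B + 1, by linarith, fun k => ?_⟩
  calc ‖LinearMap.toContinuousLinearMap (Matrix.toEuclideanLin (Hmat p k))‖ ≤ B := by
        apply schur_test _ _ hB0
        · exact fun i => Hmat_row_sum_le p hp hp1 k i
        · intro j
          have : ∀ i : Fin k, |Hmat p k i j| = |Hmat p k j i| := fun i => by
            rw [Hmat_symm]
          simp_rw [this]
          exact Hmat_row_sum_le p hp hp1 k j
    _ ≤ B + 1 := by linarith
end
end

section
/- Let m ∈ ℕ, m ≥ 1, λ = 1/m, and 1/2 < p ≤ 1. Let ω be the environment on ℤ with ω(x) = p whenever m divides x and ω(x) = 1/2 otherwise. Then for the random walk (X_n) in ω started at any point, almost surely lim_{n→∞} X_n/n exists and equals (2p−1)λ = (2p−1)/m. -/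
open MeasureTheory Filter Finset Matrix
open scoped ENNReal
noncomputable section

/-- One-step transition probabilities of the nearest-neighbor random walk on `ℤ`
in the environment `ω`: from `z` the walk moves to `z+1` with probability `ω z`
and to `z-1` with probability `1 - ω z`. -/
def envStep (ω : ℤ → ℝ) (z y : ℤ) : ℝ :=
  if y = z + 1 then ω z else if y = z - 1 then 1 - ω z else 0

/-- `IsWalkLaw step x P` : `P` is the law of the Markov chain on `ℤ` started at `x`
with one-step transition probabilities `step`, viewed as a measure on trajectories. -/
def IsWalkLaw (step : ℤ → ℤ → ℝ) (x : ℤ) (P : Measure (ℕ → ℤ)) : Prop :=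
  IsProbabilityMeasure P ∧
    ∀ (n : ℕ) (path : ℕ → ℤ),
      P {f | ∀ i ≤ n, f i = path i} =
        (if path 0 = x then (1 : ℝ≥0∞) else 0) *
          ∏ i ∈ Finset.range n, ENNReal.ofReal (step (path i) (path (i + 1)))

/-- A `(p,λ)` environment : each site is a `(1/2,1/2)` or a `(p,1-p)` site and the
upper density of `(p,1-p)` sites on the nonnegative integers equals `λ`. -/
def IsPLEnv (p lam : ℝ) (ω : ℤ → ℝ) : Prop :=
  (∀ x : ℤ, ω x = 1 / 2 ∨ ω x = p) ∧
    Filter.limsup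
      (fun n : ℕ => (∑ x ∈ Finset.range (n + 1), if ω (x : ℤ) = p then (1 : ℝ) else 0) / (n + 1))
      Filter.atTop = lam

/-- First hitting time of `z` by the trajectory `f` (`⊤` if `z` is never visited). -/
def hitTime (f : ℕ → ℤ) (z : ℤ) : ℕ∞ :=
  ⨅ (m : ℕ) (_ : f m = z), (m : ℕ∞)

def corr (m : ℕ) (p : ℝ) (z : ℤ) : ℝ :=
  ((2*p-1)/m) * ((z % (m:ℤ) : ℤ) * ((z % (m:ℤ) : ℤ) - m))

lemma emod_succ (m : ℕ) (hm : 1 ≤ m) (z : ℤ) :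
    (z+1) % (m:ℤ) = if z % (m:ℤ) = (m:ℤ) - 1 then 0 else z % (m:ℤ) + 1 := by
  have hm0 : (0:ℤ) < m := by exact_mod_cast hm
  have h1 : (z+1) % (m:ℤ) = (z % m + 1) % m := (Int.emod_add_emod z (m:ℤ) 1).symm
  have hk0 : 0 ≤ z % (m:ℤ) := Int.emod_nonneg z (ne_of_gt hm0)
  have hkm : z % (m:ℤ) < m := Int.emod_lt_of_pos z hm0
  by_cases h : z % (m:ℤ) = (m:ℤ) - 1
  · simp only [h, if_true]
    rw [h1, h]
    simp
  · simp only [h, if_false]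
    rw [h1, Int.emod_eq_of_lt (by omega) (by omega)]

lemma emod_pred (m : ℕ) (hm : 1 ≤ m) (z : ℤ) :
    (z-1) % (m:ℤ) = if z % (m:ℤ) = 0 then (m:ℤ) - 1 else z % (m:ℤ) - 1 := by
  have hm0 : (0:ℤ) < m := by exact_mod_cast hm
  have h1 : (z-1) % (m:ℤ) = (z % m - 1) % m := by
    have := Int.emod_add_emod z (m:ℤ) (-1)
    have e1 : z % (m:ℤ) + -1 = z % m - 1 := by ring
    have e2 : z + -1 = z - 1 := by ring
    rw [e1, e2] at this
    exact this.symm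
  have hk0 : 0 ≤ z % (m:ℤ) := Int.emod_nonneg z (ne_of_gt hm0)
  have hkm : z % (m:ℤ) < m := Int.emod_lt_of_pos z hm0
  by_cases h : z % (m:ℤ) = 0
  · simp only [h, if_true]
    rw [h1, h]
    have e3 : (0 - 1 : ℤ) = -1 + m * 1 - m := by ring
    rw [e3, Int.sub_emod, Int.add_mul_emod_self_left, Int.emod_self]
    have : (-1 : ℤ) % m = m - 1 := by
      have h4 : ((m:ℤ) - 1) % m = m - 1 := Int.emod_eq_of_lt (by omega) (by omega)
      have h5 : ((m:ℤ) - 1) % m = (-1 : ℤ) % m := by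
        have := Int.add_mul_emod_self_left (a := (-1:ℤ)) (b := (m:ℤ)) (c := 1)
        rw [show (-1 + (m:ℤ) * 1) = (m:ℤ) - 1 by ring] at this
        exact this
      omega
    rw [this, Int.emod_eq_of_lt (by omega) (by omega)]
    omega
  · simp only [h, if_false]
    rw [h1, Int.emod_eq_of_lt (by omega) (by omega)]

lemma poisson (m : ℕ) (hm : 1 ≤ m) (p : ℝ) (z : ℤ) :
    (if (m:ℤ) ∣ z then p else 1/2) * (1 + corr m p (z+1)) +
      (1 - (if (m:ℤ) ∣ z then p else 1/2)) * (-1 + corr m p (z-1)) =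
      (2*p-1)/(m:ℝ) + corr m p z := by
  have hm0 : (0:ℤ) < m := by exact_mod_cast hm
  have hmR : (m:ℝ) ≠ 0 := by positivity
  have hk0 : 0 ≤ z % (m:ℤ) := Int.emod_nonneg z (ne_of_gt hm0)
  have hkm : z % (m:ℤ) < m := Int.emod_lt_of_pos z hm0
  have hdvd : (m:ℤ) ∣ z ↔ z % (m:ℤ) = 0 := Int.dvd_iff_emod_eq_zero
  unfold corr
  by_cases h : z % (m:ℤ) = 0
  · by_cases h2 : (m:ℕ) = 1
    · subst h2
      have r1 : (z+1) % ((1:ℕ):ℤ) = 0 := by simp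
      have r2 : (z-1) % ((1:ℕ):ℤ) = 0 := by simp
      rw [r1, r2, h, if_pos (hdvd.mpr h)]
      push_cast
      ring
    · have r1 : (z+1) % (m:ℤ) = 1 := by
        rw [emod_succ m hm z, if_neg (by omega), h]
        norm_num
      have r2 : (z-1) % (m:ℤ) = (m:ℤ) - 1 := by
        rw [emod_pred m hm z, if_pos h]
      rw [r1, r2, h, if_pos (hdvd.mpr h)]
      push_cast
      field_simp
      ring
  · have h' : ¬ (m:ℤ) ∣ z := fun hd => h (hdvd.mp hd)
    rw [if_neg h']
    by_cases h2 : z % (m:ℤ) = (m:ℤ) - 1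
    · have r1 : (z+1) % (m:ℤ) = 0 := by rw [emod_succ m hm z, if_pos h2]
      have r2 : (z-1) % (m:ℤ) = z % (m:ℤ) - 1 := by rw [emod_pred m hm z, if_neg h]
      rw [r1, r2, h2]
      push_cast
      field_simp
      ring
    · have r1 : (z+1) % (m:ℤ) = z % (m:ℤ) + 1 := by rw [emod_succ m hm z, if_neg h2]
      have r2 : (z-1) % (m:ℤ) = z % (m:ℤ) - 1 := by rw [emod_pred m hm z, if_neg h]
      rw [r1, r2]
      push_cast
      field_simp
      ring

lemma corr_abs (m : ℕ) (hm : 1 ≤ m) (p : ℝ) (hp : 1/2 < p) (hp1 : p ≤ 1) (z : ℤ) :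
    |corr m p z| ≤ (m:ℝ)^2 := by
  have hm0 : (0:ℤ) < m := by exact_mod_cast hm
  have hk0 : 0 ≤ z % (m:ℤ) := Int.emod_nonneg z (ne_of_gt hm0)
  have hkm : z % (m:ℤ) < m := Int.emod_lt_of_pos z hm0
  have hk0R : (0:ℝ) ≤ ((z % (m:ℤ) : ℤ) : ℝ) := by exact_mod_cast hk0
  have hkmR : ((z % (m:ℤ) : ℤ) : ℝ) < (m:ℝ) := by exact_mod_cast hkm
  have hm1 : (1:ℝ) ≤ (m:ℝ) := by exact_mod_cast hm
  unfold corr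
  rw [abs_mul]
  have h1 : |(2*p-1)/(m:ℝ)| ≤ 1 := by
    rw [abs_div, abs_of_pos (by positivity : (0:ℝ) < (m:ℝ))]
    rw [div_le_one (by positivity)]
    rw [abs_le]
    constructor <;> nlinarith
  have h2 : |((z % (m:ℤ) : ℤ) : ℝ) * (((z % (m:ℤ) : ℤ) : ℝ) - (m:ℝ))| ≤ (m:ℝ)^2 := by
    rw [abs_le]
    constructor <;> nlinarith
  calc |(2*p-1)/(m:ℝ)| * |((z % (m:ℤ) : ℤ) : ℝ) * (((z % (m:ℤ) : ℤ) : ℝ) - (m:ℝ))|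
      ≤ 1 * ((m:ℝ)^2) := mul_le_mul h1 h2 (abs_nonneg _) (by norm_num)
    _ = (m:ℝ)^2 := one_mul _

lemma exp_quad {t : ℝ} (ht : |t| ≤ 1) : Real.exp t ≤ 1 + t + t^2 := by
  have h := Real.exp_bound ht (n := 2) (by norm_num)
  have h2 : ∑ i ∈ Finset.range 2, t ^ i / (i.factorial : ℝ) = 1 + t := by
    simp [Finset.sum_range_succ]
  rw [h2] at h
  have h3 : |t|^2 * ((2:ℕ).succ / ((2:ℕ).factorial * (2:ℕ))) = t^2 * (3/4) := by
    rw [sq_abs]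
    norm_num [Nat.factorial]
  rw [h3] at h
  have := abs_le.mp h
  nlinarith [sq_nonneg t]

set_option maxHeartbeats 1000000 in
lemma onestep (m : ℕ) (hm : 1 ≤ m) (p : ℝ) (hp : 1/2 < p) (hp1 : p ≤ 1)
    (θ : ℝ) (hθ : |θ| * (1 + 2*(m:ℝ)^2) ≤ 1) (z : ℤ) :
    (if (m:ℤ) ∣ z then p else 1/2) * Real.exp (θ * (((z:ℝ)+1) + corr m p (z+1))) +
      (1 - (if (m:ℤ) ∣ z then p else 1/2)) * Real.exp (θ * (((z:ℝ)-1) + corr m p (z-1))) ≤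
    Real.exp (θ * ((2*p-1)/(m:ℝ)) + θ^2 * (1 + 2*(m:ℝ)^2)^2) * Real.exp (θ * ((z:ℝ) + corr m p z)) := by
  set w : ℝ := if (m:ℤ) ∣ z then p else 1/2 with hw
  have hw0 : 0 ≤ w := by rw [hw]; split <;> linarith
  have hw1 : w ≤ 1 := by rw [hw]; split <;> linarith
  set A : ℝ := 1 + corr m p (z+1) - corr m p z with hA
  set B : ℝ := -1 + corr m p (z-1) - corr m p z with hB
  set Mb : ℝ := 1 + 2*(m:ℝ)^2 with hMb
  have hm1 : (1:ℝ) ≤ (m:ℝ) := by exact_mod_cast hm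
  have hMb1 : (1:ℝ) ≤ Mb := by nlinarith
  have habs1 := corr_abs m hm p hp hp1 (z+1)
  have habs2 := corr_abs m hm p hp hp1 (z-1)
  have habs3 := corr_abs m hm p hp hp1 z
  have hAle : |A| ≤ Mb := by
    rw [abs_le] at *
    constructor <;> [skip; skip] <;> simp only [hA, hMb] <;> nlinarith
  have hBle : |B| ≤ Mb := by
    rw [abs_le] at *
    constructor <;> [skip; skip] <;> simp only [hB, hMb] <;> nlinarith
  have hv : w * A + (1 - w) * B = (2*p-1)/(m:ℝ) := by
    have := poisson m hm p z
    rw [← hw] at this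
    simp only [hA, hB]
    push_cast
    linarith [this]
  have hθA : |θ * A| ≤ 1 := by
    rw [abs_mul]
    calc |θ| * |A| ≤ |θ| * Mb := by
          apply mul_le_mul_of_nonneg_left hAle (abs_nonneg θ)
      _ ≤ 1 := hθ
  have hθB : |θ * B| ≤ 1 := by
    rw [abs_mul]
    calc |θ| * |B| ≤ |θ| * Mb := by
          apply mul_le_mul_of_nonneg_left hBle (abs_nonneg θ)
      _ ≤ 1 := hθ
  have eA : θ * (((z:ℝ)+1) + corr m p (z+1)) = θ * A + θ * ((z:ℝ) + corr m p z) := by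
    simp only [hA]; ring
  have eB : θ * (((z:ℝ)-1) + corr m p (z-1)) = θ * B + θ * ((z:ℝ) + corr m p z) := by
    simp only [hB]; ring
  rw [eA, eB, Real.exp_add, Real.exp_add, ← mul_assoc, ← mul_assoc, ← add_mul]
  apply mul_le_mul_of_nonneg_right _ (Real.exp_nonneg _)
  clear_value w A B Mb
  have e1 : Real.exp (θ * A) ≤ 1 + θ*A + (θ*A)^2 := exp_quad hθA
  have e2 : Real.exp (θ * B) ≤ 1 + θ*B + (θ*B)^2 := exp_quad hθB
  have key : w * Real.exp (θ*A) + (1-w) * Real.exp (θ*B) ≤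
      1 + (θ * ((2*p-1)/(m:ℝ)) + θ^2 * Mb^2) := by
    have hA2 : A^2 ≤ Mb^2 := sq_le_sq' (abs_le.mp hAle).1 (abs_le.mp hAle).2
    have hB2 : B^2 ≤ Mb^2 := sq_le_sq' (abs_le.mp hBle).1 (abs_le.mp hBle).2
    have s1 : w * Real.exp (θ*A) ≤ w * (1+θ*A+(θ*A)^2) := mul_le_mul_of_nonneg_left e1 hw0
    have s2 : (1-w) * Real.exp (θ*B) ≤ (1-w) * (1+θ*B+(θ*B)^2) :=
      mul_le_mul_of_nonneg_left e2 (by linarith)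
    have s3 : w*A^2 + (1-w)*B^2 ≤ Mb^2 := by
      have u1 := mul_le_mul_of_nonneg_left hA2 hw0
      have u2 := mul_le_mul_of_nonneg_left hB2 (by linarith : (0:ℝ) ≤ 1-w)
      nlinarith
    have expand : w * (1+θ*A+(θ*A)^2) + (1-w) * (1+θ*B+(θ*B)^2) =
        1 + θ*(w*A+(1-w)*B) + θ^2*(w*A^2+(1-w)*B^2) := by ring
    have s4 : θ^2*(w*A^2+(1-w)*B^2) ≤ θ^2*Mb^2 :=
      mul_le_mul_of_nonneg_left s3 (sq_nonneg θ)
    rw [hv] at expand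
    linarith
  calc w * Real.exp (θ*A) + (1-w) * Real.exp (θ*B)
      ≤ 1 + (θ * ((2*p-1)/(m:ℝ)) + θ^2 * Mb^2) := key
    _ ≤ Real.exp (θ * ((2*p-1)/(m:ℝ)) + θ^2 * Mb^2) := by
        have := Real.add_one_le_exp (θ * ((2*p-1)/(m:ℝ)) + θ^2 * Mb^2)
        linarith
def q (m : ℕ) (p : ℝ) (x : ℤ) : ℕ → ℤ → ℝ :=
  fun n => Nat.rec (fun z => if z = x then 1 else 0)
    (fun _ qn z => qn (z-1) * (if (m:ℤ) ∣ (z-1) then p else 1/2)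
      + qn (z+1) * (1 - (if (m:ℤ) ∣ (z+1) then p else 1/2))) n

lemma q_zero (m : ℕ) (p : ℝ) (x z : ℤ) : q m p x 0 z = if z = x then 1 else 0 := rfl

lemma q_succ (m : ℕ) (p : ℝ) (x : ℤ) (n : ℕ) (z : ℤ) :
    q m p x (n+1) z = q m p x n (z-1) * (if (m:ℤ) ∣ (z-1) then p else 1/2)
      + q m p x n (z+1) * (1 - (if (m:ℤ) ∣ (z+1) then p else 1/2)) := rfl

lemma q_nonneg (m : ℕ) (p : ℝ) (hp : 1/2 < p) (hp1 : p ≤ 1) (x : ℤ) :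
    ∀ (n : ℕ) (z : ℤ), 0 ≤ q m p x n z := by
  intro n
  induction n with
  | zero => intro z; rw [q_zero]; split <;> norm_num
  | succ n ih =>
    intro z
    rw [q_succ]
    have h1 := ih (z-1)
    have h2 := ih (z+1)
    have w1 : (0:ℝ) ≤ (if (m:ℤ) ∣ (z-1) then p else 1/2) := by split <;> linarith
    have w2 : (if (m:ℤ) ∣ (z+1) then p else 1/2) ≤ 1 := by split <;> linarith
    have := mul_nonneg h1 w1
    have := mul_nonneg h2 (by linarith : (0:ℝ) ≤ 1 - (if (m:ℤ) ∣ (z+1) then p else 1/2))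
    linarith

lemma q_support (m : ℕ) (p : ℝ) (x : ℤ) :
    ∀ (n : ℕ) (z : ℤ), (z < x - (n:ℤ) ∨ x + (n:ℤ) < z) → q m p x n z = 0 := by
  intro n
  induction n with
  | zero => intro z hz; rw [q_zero, if_neg]; push_cast at hz; omega
  | succ n ih =>
    intro z hz
    push_cast at hz ⊢
    rw [q_succ]
    rw [ih (z-1) (by push_cast; omega), ih (z+1) (by push_cast; omega)]
    ring

lemma sum_shrink (g : ℤ → ℝ) (a b a' b' : ℤ) (ha : a' ≤ a) (hb : b ≤ b')
    (h0 : ∀ z, z < a ∨ b < z → g z = 0) :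
    ∑ z ∈ Finset.Icc a' b', g z = ∑ z ∈ Finset.Icc a b, g z := by
  refine (Finset.sum_subset (Finset.Icc_subset_Icc ha hb) ?_).symm
  intro z hz hz2
  apply h0
  simp only [Finset.mem_Icc] at hz hz2
  omega

/-- The Lyapunov functional. -/
def Lfun (m : ℕ) (p : ℝ) (x : ℤ) (θ : ℝ) (n : ℕ) : ℝ :=
  ∑ z ∈ Finset.Icc (x - (n:ℤ)) (x + (n:ℤ)),
    q m p x n z * Real.exp (θ * ((z:ℝ) + corr m p z))

lemma Lfun_zero (m : ℕ) (p : ℝ) (x : ℤ) (θ : ℝ) :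
    Lfun m p x θ 0 = Real.exp (θ * ((x:ℝ) + corr m p x)) := by
  simp [Lfun, q_zero]

lemma Lfun_nonneg (m : ℕ) (p : ℝ) (hp : 1/2 < p) (hp1 : p ≤ 1) (x : ℤ) (θ : ℝ) (n : ℕ) :
    0 ≤ Lfun m p x θ n :=
  Finset.sum_nonneg fun z _ => mul_nonneg (q_nonneg m p hp hp1 x n z) (Real.exp_nonneg _)

lemma term_le_Lfun (m : ℕ) (p : ℝ) (hp : 1/2 < p) (hp1 : p ≤ 1) (x : ℤ) (θ : ℝ) (n : ℕ) (z : ℤ) :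
    q m p x n z * Real.exp (θ * ((z:ℝ) + corr m p z)) ≤ Lfun m p x θ n := by
  unfold Lfun
  by_cases hz : z ∈ Finset.Icc (x - (n:ℤ)) (x + (n:ℤ))
  · exact Finset.single_le_sum
      (fun y _ => mul_nonneg (q_nonneg m p hp hp1 x n y) (Real.exp_nonneg (θ * ((y:ℝ) + corr m p y)))) hz
  · simp only [Finset.mem_Icc, not_and_or, not_le] at hz
    rw [q_support m p x n z (by omega)]
    rw [zero_mul]
    exact Finset.sum_nonneg fun y _ => mul_nonneg (q_nonneg m p hp hp1 x n y) (Real.exp_nonneg _)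

lemma Lfun_step (m : ℕ) (hm : 1 ≤ m) (p : ℝ) (hp : 1/2 < p) (hp1 : p ≤ 1) (x : ℤ)
    (θ : ℝ) (hθ : |θ| * (1 + 2*(m:ℝ)^2) ≤ 1) (n : ℕ) :
    Lfun m p x θ (n+1) ≤
      Real.exp (θ * ((2*p-1)/(m:ℝ)) + θ^2 * (1 + 2*(m:ℝ)^2)^2) * Lfun m p x θ n := by
  classical
  set φ : ℤ → ℝ := fun z => Real.exp (θ * ((z:ℝ) + corr m p z)) with hφ
  set w : ℤ → ℝ := fun z => if (m:ℤ) ∣ z then p else 1/2 with hw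
  have expand : Lfun m p x θ (n+1) =
      (∑ z ∈ Finset.Icc (x - (n:ℤ) - 1) (x + (n:ℤ) + 1), q m p x n (z-1) * w (z-1) * φ z) +
      (∑ z ∈ Finset.Icc (x - (n:ℤ) - 1) (x + (n:ℤ) + 1), q m p x n (z+1) * (1 - w (z+1)) * φ z) := by
    rw [Lfun, ← Finset.sum_add_distrib]
    have hbd : x - ((n:ℕ)+1 : ℕ) = x - (n:ℤ) - 1 ∧ x + ((n:ℕ)+1 : ℕ) = x + (n:ℤ) + 1 := by
      constructor <;> push_cast <;> ring
    rw [hbd.1, hbd.2]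
    apply Finset.sum_congr rfl
    intro z _
    rw [q_succ]
    simp only [hw, hφ]
    ring
  -- first sum: shift by 1
  have shift1 : (∑ z ∈ Finset.Icc (x - (n:ℤ) - 1) (x + (n:ℤ) + 1), q m p x n (z-1) * w (z-1) * φ z)
      = ∑ y ∈ Finset.Icc (x - (n:ℤ) - 2) (x + (n:ℤ)), q m p x n y * w y * φ (y+1) := by
    have : Finset.Icc (x - (n:ℤ) - 1) (x + (n:ℤ) + 1) =
        Finset.map (addRightEmbedding (1:ℤ)) (Finset.Icc (x - (n:ℤ) - 2) (x + (n:ℤ))) := by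
      rw [Finset.map_add_right_Icc]
      congr 1 <;> ring
    rw [this, Finset.sum_map]
    apply Finset.sum_congr rfl
    intro y _
    simp only [addRightEmbedding_apply, add_sub_cancel_right]
  have shift2 : (∑ z ∈ Finset.Icc (x - (n:ℤ) - 1) (x + (n:ℤ) + 1), q m p x n (z+1) * (1 - w (z+1)) * φ z)
      = ∑ y ∈ Finset.Icc (x - (n:ℤ)) (x + (n:ℤ) + 2), q m p x n y * (1 - w y) * φ (y-1) := by
    have : Finset.Icc (x - (n:ℤ) - 1) (x + (n:ℤ) + 1) =
        Finset.map (addRightEmbedding (-1:ℤ)) (Finset.Icc (x - (n:ℤ)) (x + (n:ℤ) + 2)) := by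
      rw [Finset.map_add_right_Icc]
      congr 1 <;> ring
    rw [this, Finset.sum_map]
    apply Finset.sum_congr rfl
    intro y _
    simp only [addRightEmbedding_apply]
    have h1 : y + (-1:ℤ) = y - 1 := by ring
    rw [h1]
    have h2 : y - 1 + 1 = y := by ring
    rw [h2]
  have shrink1 : ∑ y ∈ Finset.Icc (x - (n:ℤ) - 2) (x + (n:ℤ)), q m p x n y * w y * φ (y+1)
      = ∑ y ∈ Finset.Icc (x - (n:ℤ)) (x + (n:ℤ)), q m p x n y * w y * φ (y+1) := by
    apply sum_shrink _ _ _ _ _ (by omega) (by omega)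
    intro z hz
    rw [q_support m p x n z (by omega), zero_mul, zero_mul]
  have shrink2 : ∑ y ∈ Finset.Icc (x - (n:ℤ)) (x + (n:ℤ) + 2), q m p x n y * (1 - w y) * φ (y-1)
      = ∑ y ∈ Finset.Icc (x - (n:ℤ)) (x + (n:ℤ)), q m p x n y * (1 - w y) * φ (y-1) := by
    apply sum_shrink _ _ _ _ _ (by omega) (by omega)
    intro z hz
    rw [q_support m p x n z (by omega), zero_mul, zero_mul]
  rw [expand, shift1, shift2, shrink1, shrink2, ← Finset.sum_add_distrib]
  rw [Lfun, Finset.mul_sum]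
  apply Finset.sum_le_sum
  intro y _
  have hone := onestep m hm p hp hp1 θ hθ y
  have e1 : ((y+1 : ℤ) : ℝ) = (y:ℝ) + 1 := by push_cast; ring
  have e2 : ((y-1 : ℤ) : ℝ) = (y:ℝ) - 1 := by push_cast; ring
  have goal_eq : q m p x n y * w y * φ (y+1) + q m p x n y * (1 - w y) * φ (y-1)
      = q m p x n y * (w y * φ (y+1) + (1 - w y) * φ (y-1)) := by ring
  rw [goal_eq]
  have hstep : w y * φ (y+1) + (1 - w y) * φ (y-1) ≤
      Real.exp (θ * ((2*p-1)/(m:ℝ)) + θ^2 * (1 + 2*(m:ℝ)^2)^2) * φ y := by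
    simp only [hφ, hw, e1, e2]
    exact hone
  calc q m p x n y * (w y * φ (y+1) + (1 - w y) * φ (y-1))
      ≤ q m p x n y * (Real.exp (θ * ((2*p-1)/(m:ℝ)) + θ^2 * (1 + 2*(m:ℝ)^2)^2) * φ y) :=
        mul_le_mul_of_nonneg_left hstep (q_nonneg m p hp hp1 x n y)
    _ = Real.exp (θ * ((2*p-1)/(m:ℝ)) + θ^2 * (1 + 2*(m:ℝ)^2)^2) * (q m p x n y * φ y) := by ring

lemma Lfun_le (m : ℕ) (hm : 1 ≤ m) (p : ℝ) (hp : 1/2 < p) (hp1 : p ≤ 1) (x : ℤ)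
    (θ : ℝ) (hθ : |θ| * (1 + 2*(m:ℝ)^2) ≤ 1) (n : ℕ) :
    Lfun m p x θ n ≤
      Real.exp ((n:ℝ) * (θ * ((2*p-1)/(m:ℝ)) + θ^2 * (1 + 2*(m:ℝ)^2)^2)) *
        Real.exp (θ * ((x:ℝ) + corr m p x)) := by
  induction n with
  | zero => simp [Lfun_zero]
  | succ n ih =>
    have hcast : ((n+1 : ℕ) : ℝ) = (n:ℝ) + 1 := by push_cast; ring
    rw [hcast]
    calc Lfun m p x θ (n+1)
        ≤ Real.exp (θ * ((2*p-1)/(m:ℝ)) + θ^2 * (1 + 2*(m:ℝ)^2)^2) * Lfun m p x θ n :=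
          Lfun_step m hm p hp hp1 x θ hθ n
      _ ≤ Real.exp (θ * ((2*p-1)/(m:ℝ)) + θ^2 * (1 + 2*(m:ℝ)^2)^2) *
            (Real.exp ((n:ℝ) * (θ * ((2*p-1)/(m:ℝ)) + θ^2 * (1 + 2*(m:ℝ)^2)^2)) *
              Real.exp (θ * ((x:ℝ) + corr m p x))) :=
          mul_le_mul_of_nonneg_left ih (Real.exp_nonneg _)
      _ = Real.exp (((n:ℝ)+1) * (θ * ((2*p-1)/(m:ℝ)) + θ^2 * (1 + 2*(m:ℝ)^2)^2)) *
            Real.exp (θ * ((x:ℝ) + corr m p x)) := by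
          rw [← mul_assoc, ← Real.exp_add]
          congr 2
          ring

/-- Pointwise Chernoff-type bound on `q`. -/
lemma q_pointwise (m : ℕ) (hm : 1 ≤ m) (p : ℝ) (hp : 1/2 < p) (hp1 : p ≤ 1) (x : ℤ)
    (θ : ℝ) (hθ : |θ| * (1 + 2*(m:ℝ)^2) ≤ 1) (n : ℕ) (z : ℤ) :
    q m p x n z ≤ Real.exp ((n:ℝ) * (θ * ((2*p-1)/(m:ℝ)) + θ^2 * (1 + 2*(m:ℝ)^2)^2)
      + θ * ((x:ℝ) + corr m p x) - θ * ((z:ℝ) + corr m p z)) := by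
  have h1 := term_le_Lfun m p hp hp1 x θ n z
  have h2 := Lfun_le m hm p hp hp1 x θ hθ n
  have h3 : q m p x n z * Real.exp (θ * ((z:ℝ) + corr m p z)) ≤
      Real.exp ((n:ℝ) * (θ * ((2*p-1)/(m:ℝ)) + θ^2 * (1 + 2*(m:ℝ)^2)^2)) *
        Real.exp (θ * ((x:ℝ) + corr m p x)) := le_trans h1 h2
  have hpos : (0:ℝ) < Real.exp (θ * ((z:ℝ) + corr m p z)) := Real.exp_pos _
  rw [← le_div_iff₀ hpos] at h3
  calc q m p x n z ≤ _ := h3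
    _ = _ := by
      rw [← Real.exp_add, Real.exp_sub]
def extPath (n : ℕ) (a : Fin (n+1) → ℤ) : ℕ → ℤ := fun i => if h : i < n+1 then a ⟨i,h⟩ else 0

def cylD (m : ℕ) (p : ℝ) (x : ℤ) (n : ℕ) (a : Fin (n+1) → ℤ) : ℝ≥0∞ :=
  (if a 0 = x then (1:ℝ≥0∞) else 0) *
    ∏ i ∈ Finset.range n, ENNReal.ofReal
      (envStep (fun z : ℤ => if (m:ℤ) ∣ z then p else 1/2) (extPath n a i) (extPath n a (i+1)))

lemma ext_lt (n : ℕ) (a : Fin (n+1) → ℤ) (i : ℕ) (h : i < n+1) : extPath n a i = a ⟨i, h⟩ := dif_pos h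

lemma measurable_cyl (n : ℕ) (a : Fin (n+1) → ℤ) :
    MeasurableSet {f : ℕ → ℤ | ∀ i ≤ n, f i = extPath n a i} := by
  have : {f : ℕ → ℤ | ∀ i ≤ n, f i = extPath n a i} =
      ⋂ (i : ℕ) (_ : i ≤ n), (fun f : ℕ → ℤ => f i) ⁻¹' {extPath n a i} := by
    ext f; simp [Set.mem_iInter]
  rw [this]
  exact MeasurableSet.iInter fun i => MeasurableSet.iInter fun _ =>
    (measurable_pi_apply i) (measurableSet_singleton _)

lemma P_cyl (m : ℕ) (p : ℝ) (x : ℤ) (P : Measure (ℕ → ℤ))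
    (hP : IsWalkLaw (envStep (fun z : ℤ => if (m : ℤ) ∣ z then p else 1 / 2)) x P)
    (n : ℕ) (a : Fin (n+1) → ℤ) :
    P {f | ∀ i ≤ n, f i = extPath n a i} = cylD m p x n a := by
  rw [hP.2 n (extPath n a)]
  unfold cylD
  congr 1

lemma P_level (m : ℕ) (p : ℝ) (x : ℤ) (P : Measure (ℕ → ℤ))
    (hP : IsWalkLaw (envStep (fun z : ℤ => if (m : ℤ) ∣ z then p else 1 / 2)) x P)
    (n : ℕ) (z : ℤ) :
    P {f | f n = z} = ∑' a : Fin (n+1) → ℤ, (if a (Fin.last n) = z then cylD m p x n a else 0) := by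
  classical
  set C : (Fin (n+1) → ℤ) → Set (ℕ → ℤ) := fun a => {f | ∀ i ≤ n, f i = extPath n a i} with hC
  have hcov : {f : ℕ → ℤ | f n = z} = ⋃ a, ({f : ℕ → ℤ | f n = z} ∩ C a) := by
    ext f
    simp only [Set.mem_iUnion, Set.mem_inter_iff, Set.mem_setOf_eq]
    constructor
    · intro hf
      refine ⟨fun j => f (j:ℕ), hf, fun i hi => ?_⟩
      rw [ext_lt n (fun j : Fin (n+1) => f (j:ℕ)) i (by omega)]
    · rintro ⟨a, hf, -⟩
      exact hf
  have hdisj : Pairwise (Function.onFun Disjoint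
      (fun a => {f : ℕ → ℤ | f n = z} ∩ C a)) := by
    intro a b hab
    rw [Function.onFun, Set.disjoint_left]
    rintro f ⟨-, hfa⟩ ⟨-, hfb⟩
    apply hab
    funext j
    have h1 := hfa j (by omega : (j:ℕ) ≤ n)
    have h2 := hfb j (by omega : (j:ℕ) ≤ n)
    rw [ext_lt n a j (by omega)] at h1
    rw [ext_lt n b j (by omega)] at h2
    rw [Fin.eta] at h1 h2
    rw [← h1, ← h2]
  have hmeas : ∀ a : Fin (n+1) → ℤ, MeasurableSet ({f : ℕ → ℤ | f n = z} ∩ C a) := by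
    intro a
    have h1 : MeasurableSet ((fun f : ℕ → ℤ => f n) ⁻¹' {z}) :=
      (measurable_pi_apply n) (measurableSet_singleton z)
    exact h1.inter (measurable_cyl n a)
  rw [hcov, measure_iUnion hdisj hmeas]
  apply tsum_congr
  intro a
  by_cases ha : a (Fin.last n) = z
  · rw [if_pos ha]
    have : {f : ℕ → ℤ | f n = z} ∩ C a = C a := by
      apply Set.inter_eq_self_of_subset_right
      intro f hf
      have := hf n (le_refl n)
      rw [ext_lt n a n (by omega)] at this
      have hlast : (⟨n, by omega⟩ : Fin (n+1)) = Fin.last n := rfl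
      rw [hlast] at this
      simp only [Set.mem_setOf_eq]
      rw [this, ha]
    rw [this, hC]
    exact P_cyl m p x P hP n a
  · rw [if_neg ha]
    have hempty : {f : ℕ → ℤ | f n = z} ∩ C a = ∅ := by
      rw [Set.eq_empty_iff_forall_notMem]
      rintro f ⟨hf1, hf2⟩
      apply ha
      have := hf2 n (le_refl n)
      rw [ext_lt n a n (by omega)] at this
      have hlast : (⟨n, by omega⟩ : Fin (n+1)) = Fin.last n := rfl
      rw [hlast] at this
      rw [← this]
      exact hf1
    rw [hempty]
    exact measure_empty

/-- The snoc equivalence. -/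
def snocEquiv (n : ℕ) : ((Fin (n+1) → ℤ) × ℤ) ≃ (Fin (n+2) → ℤ) where
  toFun ay := Fin.snoc ay.1 ay.2
  invFun b := (Fin.init b, b (Fin.last (n+1)))
  left_inv := by
    rintro ⟨a, y⟩
    simp [Fin.init_snoc, Fin.snoc_last]
  right_inv := by
    intro b
    simp [Fin.snoc_init_self]

lemma cylD_snoc (m : ℕ) (p : ℝ) (x : ℤ) (n : ℕ) (a : Fin (n+1) → ℤ) (y : ℤ) :
    cylD m p x (n+1) (Fin.snoc a y) =
      cylD m p x n a * ENNReal.ofReal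
        (envStep (fun z : ℤ => if (m:ℤ) ∣ z then p else 1/2) (a (Fin.last n)) y) := by
  unfold cylD
  have h0 : (Fin.snoc a y : Fin (n+2) → ℤ) 0 = a 0 := by
    have : (0 : Fin (n+2)) = Fin.castSucc (0 : Fin (n+1)) := rfl
    rw [this, Fin.snoc_castSucc]
  have hext : ∀ i : ℕ, i ≤ n → extPath (n+1) (Fin.snoc a y) i = extPath n a i := by
    intro i hi
    rw [ext_lt (n+1) _ i (by omega), ext_lt n a i (by omega)]
    have : (⟨i, by omega⟩ : Fin (n+2)) = Fin.castSucc (⟨i, by omega⟩ : Fin (n+1)) := rfl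
    rw [this, Fin.snoc_castSucc]
  have hextlast : extPath (n+1) (Fin.snoc a y) (n+1) = y := by
    rw [ext_lt (n+1) _ (n+1) (by omega)]
    have : (⟨n+1, by omega⟩ : Fin (n+2)) = Fin.last (n+1) := rfl
    rw [this, Fin.snoc_last]
  have hextn : extPath n a n = a (Fin.last n) := by
    rw [ext_lt n a n (by omega)]
    rfl
  have hprod : (∏ i ∈ Finset.range n, ENNReal.ofReal
        (envStep (fun z : ℤ => if (m:ℤ) ∣ z then p else 1/2)
          (extPath (n+1) (Fin.snoc a y) i) (extPath (n+1) (Fin.snoc a y) (i+1))))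
      = ∏ i ∈ Finset.range n, ENNReal.ofReal
        (envStep (fun z : ℤ => if (m:ℤ) ∣ z then p else 1/2) (extPath n a i) (extPath n a (i+1))) := by
    apply Finset.prod_congr rfl
    intro i hi
    simp only [Finset.mem_range] at hi
    rw [hext i (by omega), hext (i+1) (by omega)]
  rw [Finset.prod_range_succ, h0, hprod, hext n (le_refl n), hextn, hextlast, mul_assoc]

lemma T_eq (m : ℕ) (p : ℝ) (hp : 1/2 < p) (hp1 : p ≤ 1) (x : ℤ) :
    ∀ (n : ℕ) (z : ℤ),
      (∑' a : Fin (n+1) → ℤ, (if a (Fin.last n) = z then cylD m p x n a else 0))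
        = ENNReal.ofReal (q m p x n z) := by
  intro n
  induction n with
  | zero =>
    intro z
    rw [← (Equiv.funUnique (Fin 1) ℤ).symm.tsum_eq]
    have h1 : ∀ y : ℤ, ((Equiv.funUnique (Fin 1) ℤ).symm y) (Fin.last 0) = y := fun y => rfl
    have h2 : ∀ y : ℤ, cylD m p x 0 ((Equiv.funUnique (Fin 1) ℤ).symm y)
        = (if y = x then (1:ℝ≥0∞) else 0) := by
      intro y
      unfold cylD
      simp
    calc ∑' y : ℤ, (if ((Equiv.funUnique (Fin 1) ℤ).symm y) (Fin.last 0) = z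
            then cylD m p x 0 ((Equiv.funUnique (Fin 1) ℤ).symm y) else 0)
        = ∑' y : ℤ, (if y = z then (if y = x then (1:ℝ≥0∞) else 0) else 0) := by
          apply tsum_congr; intro y; rw [h1, h2]
      _ = (if z = x then (1:ℝ≥0∞) else 0) := by
          rw [tsum_eq_single z]
          · rw [if_pos rfl]
          · intro y hy; rw [if_neg hy]
      _ = ENNReal.ofReal (q m p x 0 z) := by
          rw [q_zero]
          split <;> simp
  | succ n ih =>
    intro z
    rw [← (snocEquiv n).tsum_eq]
    have step_eq : ∀ (ay : (Fin (n+1) → ℤ) × ℤ),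
        (if (snocEquiv n ay) (Fin.last (n+1)) = z then cylD m p x (n+1) (snocEquiv n ay) else 0)
        = (if ay.2 = z then cylD m p x n ay.1 * ENNReal.ofReal
            (envStep (fun w : ℤ => if (m:ℤ) ∣ w then p else 1/2) (ay.1 (Fin.last n)) ay.2) else 0) := by
      rintro ⟨a, y⟩
      have hlast : (snocEquiv n (a, y)) (Fin.last (n+1)) = y := by
        show (Fin.snoc a y : Fin (n+2) → ℤ) (Fin.last (n+1)) = y
        simp
      rw [hlast]
      by_cases hy : y = z
      · rw [if_pos hy, if_pos hy]
        exact cylD_snoc m p x n a y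
      · rw [if_neg hy, if_neg hy]
    rw [tsum_congr step_eq, ENNReal.tsum_prod']
    have inner : ∀ a : Fin (n+1) → ℤ,
        (∑' y : ℤ, (if y = z then cylD m p x n a * ENNReal.ofReal
            (envStep (fun w : ℤ => if (m:ℤ) ∣ w then p else 1/2) (a (Fin.last n)) y) else 0))
        = cylD m p x n a * ENNReal.ofReal
            (envStep (fun w : ℤ => if (m:ℤ) ∣ w then p else 1/2) (a (Fin.last n)) z) := by
      intro a
      rw [tsum_eq_single z]
      · rw [if_pos rfl]
      · intro y hy; rw [if_neg hy]
    rw [tsum_congr inner]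
    -- now regroup by the value of a (Fin.last n)
    have regroup : (∑' a : Fin (n+1) → ℤ, cylD m p x n a * ENNReal.ofReal
          (envStep (fun w : ℤ => if (m:ℤ) ∣ w then p else 1/2) (a (Fin.last n)) z))
        = ∑' u : ℤ, ENNReal.ofReal (q m p x n u) * ENNReal.ofReal
            (envStep (fun w : ℤ => if (m:ℤ) ∣ w then p else 1/2) u z) := by
      have h1 : ∀ a : Fin (n+1) → ℤ, cylD m p x n a * ENNReal.ofReal
            (envStep (fun w : ℤ => if (m:ℤ) ∣ w then p else 1/2) (a (Fin.last n)) z)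
          = ∑' u : ℤ, (if a (Fin.last n) = u then cylD m p x n a else 0) * ENNReal.ofReal
            (envStep (fun w : ℤ => if (m:ℤ) ∣ w then p else 1/2) u z) := by
        intro a
        rw [tsum_eq_single (a (Fin.last n))]
        · rw [if_pos rfl]
        · intro u hu
          rw [if_neg (Ne.symm hu), zero_mul]
      rw [tsum_congr h1, ENNReal.tsum_comm]
      apply tsum_congr
      intro u
      rw [ENNReal.tsum_mul_right, ih u]
    rw [regroup]
    -- final: two-point sum
    have hfin : ∀ u : ℤ, u ∉ ({z-1, z+1} : Finset ℤ) →
        ENNReal.ofReal (q m p x n u) * ENNReal.ofReal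
          (envStep (fun w : ℤ => if (m:ℤ) ∣ w then p else 1/2) u z) = 0 := by
      intro u hu
      simp only [Finset.mem_insert, Finset.mem_singleton] at hu
      push_neg at hu
      have : envStep (fun w : ℤ => if (m:ℤ) ∣ w then p else 1/2) u z = 0 := by
        unfold envStep
        rw [if_neg (by omega), if_neg (by omega)]
      rw [this, ENNReal.ofReal_zero, mul_zero]
    rw [tsum_eq_sum hfin, Finset.sum_pair (by omega : z - 1 ≠ z + 1)]
    have e1 : envStep (fun w : ℤ => if (m:ℤ) ∣ w then p else 1/2) (z-1) z
        = (if (m:ℤ) ∣ (z-1) then p else 1/2) := by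
      unfold envStep
      rw [if_pos (by omega)]
    have e2 : envStep (fun w : ℤ => if (m:ℤ) ∣ w then p else 1/2) (z+1) z
        = 1 - (if (m:ℤ) ∣ (z+1) then p else 1/2) := by
      unfold envStep
      rw [if_neg (by omega), if_pos (by omega)]
    rw [e1, e2, q_succ]
    have w1 : (0:ℝ) ≤ (if (m:ℤ) ∣ (z-1) then p else 1/2) := by split <;> linarith
    have w2 : (0:ℝ) ≤ 1 - (if (m:ℤ) ∣ (z+1) then p else 1/2) := by split <;> linarith
    rw [← ENNReal.ofReal_mul (q_nonneg m p hp hp1 x n (z-1)),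
        ← ENNReal.ofReal_mul (q_nonneg m p hp hp1 x n (z+1)),
        ← ENNReal.ofReal_add (mul_nonneg (q_nonneg m p hp hp1 x n (z-1)) w1)
          (mul_nonneg (q_nonneg m p hp hp1 x n (z+1)) w2)]

lemma P_eq_q (m : ℕ) (p : ℝ) (hp : 1/2 < p) (hp1 : p ≤ 1) (x : ℤ) (P : Measure (ℕ → ℤ))
    (hP : IsWalkLaw (envStep (fun z : ℤ => if (m : ℤ) ∣ z then p else 1 / 2)) x P)
    (n : ℕ) (z : ℤ) :
    P {f | f n = z} = ENNReal.ofReal (q m p x n z) := by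
  rw [P_level m p x P hP n z, T_eq m p hp hp1 x n z]

lemma measurable_level (n : ℕ) (z : ℤ) : MeasurableSet {f : ℕ → ℤ | f n = z} := by
  have h1 : MeasurableSet ((fun f : ℕ → ℤ => f n) ⁻¹' {z}) :=
    (measurable_pi_apply n) (measurableSet_singleton z)
  exact h1

lemma tail_bound (m : ℕ) (p : ℝ) (hp : 1/2 < p) (hp1 : p ≤ 1) (x : ℤ) (P : Measure (ℕ → ℤ))
    (hP : IsWalkLaw (envStep (fun z : ℤ => if (m : ℤ) ∣ z then p else 1 / 2)) x P)
    (n : ℕ) (pred : ℤ → Prop) [DecidablePred pred] (E : ℝ) (hE0 : 0 ≤ E)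
    (hE : ∀ z : ℤ, pred z → q m p x n z ≤ E) :
    P {f | pred (f n)} ≤ ((2*n+1 : ℕ) : ℝ≥0∞) * ENNReal.ofReal E := by
  classical
  set T : ℤ → Set (ℕ → ℤ) := fun z => if pred z then {f : ℕ → ℤ | f n = z} else ∅ with hT
  have hsub : {f : ℕ → ℤ | pred (f n)} ⊆ ⋃ z : ℤ, T z := by
    intro f hf
    refine Set.mem_iUnion.mpr ⟨f n, ?_⟩
    simp only [Set.mem_setOf_eq] at hf
    show f ∈ (if pred (f n) then {g : ℕ → ℤ | g n = f n} else ∅)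
    rw [if_pos hf]
    exact rfl
  have h1 : P {f | pred (f n)} ≤ ∑' z : ℤ, P (T z) :=
    le_trans (measure_mono hsub) (measure_iUnion_le T)
  have hTz : ∀ z : ℤ, P (T z) = if pred z then ENNReal.ofReal (q m p x n z) else 0 := by
    intro z
    by_cases h : pred z
    · have e : T z = {f : ℕ → ℤ | f n = z} := by rw [hT]; exact if_pos h
      rw [e, if_pos h, P_eq_q m p hp hp1 x P hP n z]
    · have e : T z = (∅ : Set (ℕ → ℤ)) := by rw [hT]; exact if_neg h
      rw [e, if_neg h]
      exact measure_empty
  rw [tsum_congr hTz] at h1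
  have h2 : (∑' z : ℤ, if pred z then ENNReal.ofReal (q m p x n z) else 0)
      = ∑ z ∈ Finset.Icc (x - (n:ℤ)) (x + (n:ℤ)), (if pred z then ENNReal.ofReal (q m p x n z) else 0) := by
    apply tsum_eq_sum
    intro z hz
    simp only [Finset.mem_Icc, not_and_or, not_le] at hz
    rw [q_support m p x n z (by omega)]
    simp
  rw [h2] at h1
  have h3 : (∑ z ∈ Finset.Icc (x - (n:ℤ)) (x + (n:ℤ)), (if pred z then ENNReal.ofReal (q m p x n z) else 0))
      ≤ ∑ _z ∈ Finset.Icc (x - (n:ℤ)) (x + (n:ℤ)), ENNReal.ofReal E := by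
    apply Finset.sum_le_sum
    intro z _
    by_cases h : pred z
    · rw [if_pos h]
      exact ENNReal.ofReal_le_ofReal (hE z h)
    · rw [if_neg h]
      exact zero_le
  have hcard : (Finset.Icc (x - (n:ℤ)) (x + (n:ℤ))).card = 2*n+1 := by
    rw [Int.card_Icc]
    omega
  rw [Finset.sum_const, hcard] at h3
  calc P {f | pred (f n)} ≤ _ := h1
    _ ≤ (2*n+1) • ENNReal.ofReal E := h3
    _ = ((2*n+1 : ℕ) : ℝ≥0∞) * ENNReal.ofReal E := by
        rw [nsmul_eq_mul]

/-- Chernoff bound for the upper tail event. -/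
lemma ae_eventually_tails (m : ℕ) (hm : 1 ≤ m) (p : ℝ) (hp : 1/2 < p) (hp1 : p ≤ 1)
    (x : ℤ) (P : Measure (ℕ → ℤ))
    (hP : IsWalkLaw (envStep (fun z : ℤ => if (m : ℤ) ∣ z then p else 1 / 2)) x P)
    (ε : ℝ) (hε : 0 < ε) (hε1 : ε ≤ 1) :
    (∀ᵐ f ∂P, ∀ᶠ n : ℕ in Filter.atTop,
      ¬ ((x:ℝ) + n * ((2*p-1)/(m:ℝ) + ε) ≤ ((f n : ℤ) : ℝ))) ∧
    (∀ᵐ f ∂P, ∀ᶠ n : ℕ in Filter.atTop,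
      ¬ (((f n : ℤ) : ℝ) ≤ (x:ℝ) + n * ((2*p-1)/(m:ℝ) - ε))) := by
  classical
  set v : ℝ := (2*p-1)/(m:ℝ) with hv
  set Mb : ℝ := 1 + 2*(m:ℝ)^2 with hMb
  set K : ℝ := Mb^2 with hK
  have hm1 : (1:ℝ) ≤ (m:ℝ) := by exact_mod_cast hm
  have hMb1 : (1:ℝ) ≤ Mb := by nlinarith
  have hK1 : (1:ℝ) ≤ K := by nlinarith
  set θ : ℝ := min (ε/(2*K)) (1/Mb) with hθdef
  have hθpos : 0 < θ := lt_min (by positivity) (by positivity)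
  have hθMb : θ * Mb ≤ 1 := by
    calc θ * Mb ≤ (1/Mb) * Mb := by
          apply mul_le_mul_of_nonneg_right (min_le_right _ _) (by linarith)
      _ = 1 := by field_simp
  have hθK : θ * K ≤ ε/2 := by
    calc θ * K ≤ (ε/(2*K)) * K := by
          apply mul_le_mul_of_nonneg_right (min_le_left _ _) (by linarith)
      _ = ε/2 := by field_simp
  have habsθ : |θ| = θ := abs_of_pos hθpos
  have habsθ' : |(-θ)| = θ := by rw [abs_neg, habsθ]
  -- the generic exponential bound
  set E : ℕ → ℝ := fun n => Real.exp (2*θ*(m:ℝ)^2) * Real.exp (n * (θ^2*K - θ*ε)) with hE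
  have hEpos : ∀ n, 0 < E n := fun n => mul_pos (Real.exp_pos _) (Real.exp_pos _)
  have hcorrabs : ∀ z : ℤ, |corr m p z| ≤ (m:ℝ)^2 := corr_abs m hm p hp hp1
  -- pointwise: upper side
  have hup : ∀ (n : ℕ) (z : ℤ), ((x:ℝ) + n * (v + ε) ≤ (z:ℝ)) → q m p x n z ≤ E n := by
    intro n z hz
    have h1 := q_pointwise m hm p hp hp1 x θ (by rw [habsθ]; exact hθMb) n z
    rw [← hv, ← hMb, ← hK] at h1
    refine le_trans h1 ?_
    show Real.exp ((n:ℝ) * (θ * v + θ^2*K) + θ * ((x:ℝ) + corr m p x) - θ * ((z:ℝ) + corr m p z))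
      ≤ Real.exp (2*θ*(m:ℝ)^2) * Real.exp ((n:ℝ) * (θ^2*K - θ*ε))
    rw [← Real.exp_add]
    apply Real.exp_le_exp.mpr
    have c1 : |corr m p x| ≤ (m:ℝ)^2 := hcorrabs x
    have c2 : |corr m p z| ≤ (m:ℝ)^2 := hcorrabs z
    rw [abs_le] at c1 c2
    have hθz : θ * ((x:ℝ) + n * (v + ε)) ≤ θ * (z:ℝ) :=
      mul_le_mul_of_nonneg_left hz (le_of_lt hθpos)
    nlinarith [hθpos.le]
  -- pointwise: lower side
  have hdown : ∀ (n : ℕ) (z : ℤ), ((z:ℝ) ≤ (x:ℝ) + n * (v - ε)) → q m p x n z ≤ E n := by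
    intro n z hz
    have h1 := q_pointwise m hm p hp hp1 x (-θ) (by rw [habsθ']; exact hθMb) n z
    rw [← hv, ← hMb, ← hK] at h1
    refine le_trans h1 ?_
    show Real.exp ((n:ℝ) * (-θ * v + (-θ)^2*K) + -θ * ((x:ℝ) + corr m p x) - -θ * ((z:ℝ) + corr m p z))
      ≤ Real.exp (2*θ*(m:ℝ)^2) * Real.exp ((n:ℝ) * (θ^2*K - θ*ε))
    rw [← Real.exp_add]
    apply Real.exp_le_exp.mpr
    have c1 : |corr m p x| ≤ (m:ℝ)^2 := hcorrabs x
    have c2 : |corr m p z| ≤ (m:ℝ)^2 := hcorrabs z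
    rw [abs_le] at c1 c2
    have hθz : θ * (z:ℝ) ≤ θ * ((x:ℝ) + n * (v - ε)) :=
      mul_le_mul_of_nonneg_left hz (le_of_lt hθpos)
    nlinarith [hθpos.le]
  -- summability of the bounding series
  set ρ : ℝ := Real.exp (θ^2*K - θ*ε) with hρ
  have hρ1 : ρ < 1 := by
    rw [hρ, Real.exp_lt_one_iff]
    nlinarith [hθpos, hθK, hε]
  have hρ0 : 0 < ρ := Real.exp_pos _
  have hsum : Summable (fun n : ℕ => ((2*n+1 : ℕ) : ℝ) * (Real.exp (2*θ*(m:ℝ)^2) * ρ^n)) := by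
    have hnorm : ‖ρ‖ < 1 := by rw [Real.norm_eq_abs, abs_of_pos hρ0]; exact hρ1
    have s1 : Summable (fun n : ℕ => (n:ℝ)^1 * ρ^n) :=
      summable_pow_mul_geometric_of_norm_lt_one 1 hnorm
    have s2 : Summable (fun n : ℕ => ρ^n) := summable_geometric_of_lt_one hρ0.le hρ1
    have : (fun n : ℕ => ((2*n+1 : ℕ) : ℝ) * (Real.exp (2*θ*(m:ℝ)^2) * ρ^n))
        = fun n : ℕ => (2*Real.exp (2*θ*(m:ℝ)^2)) * ((n:ℝ)^1 * ρ^n)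
            + Real.exp (2*θ*(m:ℝ)^2) * ρ^n := by
      funext n
      push_cast
      ring
    rw [this]
    exact ((s1.mul_left _).add (s2.mul_left _))
  have hEn : ∀ n : ℕ, Real.exp (n * (θ^2*K - θ*ε)) = ρ^n := by
    intro n
    rw [hρ, ← Real.exp_nat_mul]
  have hEn' : ∀ n : ℕ, E n = Real.exp (2*θ*(m:ℝ)^2) * ρ^n := by
    intro n
    rw [← hEn n]
  -- the series of measures of the bad events is finite
  have key : ∀ (pred : ℕ → ℤ → Prop) [∀ n, DecidablePred (pred n)],
      (∀ n z, pred n z → q m p x n z ≤ E n) →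
      ∀ᵐ f ∂P, ∀ᶠ n : ℕ in Filter.atTop, ¬ pred n (f n) := by
    intro pred _ hpred
    have hbound : ∀ n : ℕ, P {f | pred n (f n)} ≤
        ENNReal.ofReal (((2*n+1 : ℕ) : ℝ) * (Real.exp (2*θ*(m:ℝ)^2) * ρ^n)) := by
      intro n
      have hle := tail_bound m p hp hp1 x P hP n (pred n) (E n) (hEpos n).le (hpred n)
      refine le_trans hle (le_of_eq ?_)
      rw [hEn' n, ← ENNReal.ofReal_natCast (2*n+1),
        ← ENNReal.ofReal_mul (by positivity : (0:ℝ) ≤ ((2*n+1 : ℕ):ℝ))]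
    have htsum : (∑' n : ℕ, P {f | pred n (f n)}) ≠ ⊤ := by
      have hle : (∑' n : ℕ, P {f | pred n (f n)}) ≤
          ∑' n : ℕ, ENNReal.ofReal (((2*n+1 : ℕ) : ℝ) * (Real.exp (2*θ*(m:ℝ)^2) * ρ^n)) :=
        ENNReal.tsum_le_tsum hbound
      have heq : (∑' n : ℕ, ENNReal.ofReal (((2*n+1 : ℕ) : ℝ) * (Real.exp (2*θ*(m:ℝ)^2) * ρ^n)))
          = ENNReal.ofReal (∑' n : ℕ, ((2*n+1 : ℕ) : ℝ) * (Real.exp (2*θ*(m:ℝ)^2) * ρ^n)) :=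
        (ENNReal.ofReal_tsum_of_nonneg (fun n => by positivity) hsum).symm
      rw [heq] at hle
      exact ne_top_of_le_ne_top ENNReal.ofReal_ne_top hle
    exact ae_eventually_notMem htsum
  constructor
  · exact key (fun n z => (x:ℝ) + n * (v + ε) ≤ (z:ℝ)) hup
  · exact key (fun n z => (z:ℝ) ≤ (x:ℝ) + n * (v - ε)) hdown

/-- For `λ = 1/m` and the environment with drifts exactly at the multiples of `m`,
the walk (started anywhere) has speed: a.s. `lim X_n/n = (2p−1)λ = (2p−1)/m`. -/
theorem speed_of_equally_spaced_env
    (m : ℕ) (hm : 1 ≤ m) (p : ℝ) (hp : 1 / 2 < p) (hp1 : p ≤ 1)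
    (x : ℤ) (P : Measure (ℕ → ℤ))
    (hP : IsWalkLaw (envStep (fun z : ℤ => if (m : ℤ) ∣ z then p else 1 / 2)) x P) :
    ∀ᵐ f ∂P, Filter.Tendsto (fun n : ℕ => (f n : ℝ) / n) Filter.atTop
      (nhds ((2 * p - 1) / m)) := by
  have hmain := fun j : ℕ => ae_eventually_tails m hm p hp hp1 x P hP (1/((j:ℝ)+1))
      (by positivity)
      (by rw [div_le_one (by positivity)]; linarith [Nat.cast_nonneg (α := ℝ) j])
  have hall : ∀ᵐ f ∂P, ∀ j : ℕ,
      (∀ᶠ n : ℕ in Filter.atTop,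
        ¬ ((x:ℝ) + n * ((2*p-1)/(m:ℝ) + 1/((j:ℝ)+1)) ≤ ((f n : ℤ):ℝ))) ∧
      (∀ᶠ n : ℕ in Filter.atTop,
        ¬ (((f n : ℤ):ℝ) ≤ (x:ℝ) + n * ((2*p-1)/(m:ℝ) - 1/((j:ℝ)+1)))) := by
    rw [MeasureTheory.ae_all_iff]
    intro j
    exact ((hmain j).1.and (hmain j).2)
  filter_upwards [hall] with f hf
  rw [Metric.tendsto_atTop]
  intro ε hε
  obtain ⟨j, hj⟩ := exists_nat_gt (2/ε)
  have hjε : 1/((j:ℝ)+1) < ε/2 := by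
    rw [div_lt_iff₀ (by positivity)]
    rw [div_lt_iff₀ hε] at hj
    nlinarith [hε, Nat.cast_nonneg (α := ℝ) j]
  obtain ⟨N1, hN1⟩ := Filter.eventually_atTop.mp (hf j).1
  obtain ⟨N2, hN2⟩ := Filter.eventually_atTop.mp (hf j).2
  obtain ⟨N3, hN3⟩ := exists_nat_gt (2*|(x:ℝ)|/ε)
  refine ⟨max (max N1 N2) (max N3 1), ?_⟩
  intro n hn
  have hn1 : N1 ≤ n := le_trans (le_trans (le_max_left N1 N2) (le_max_left _ _)) hn
  have hn2 : N2 ≤ n := le_trans (le_trans (le_max_right N1 N2) (le_max_left _ _)) hn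
  have hn3 : N3 ≤ n := le_trans (le_trans (le_max_left N3 1) (le_max_right _ _)) hn
  have hn4 : 1 ≤ n := le_trans (le_trans (le_max_right N3 1) (le_max_right _ _)) hn
  have hnR : (1:ℝ) ≤ (n:ℝ) := by exact_mod_cast hn4
  have hnpos : (0:ℝ) < (n:ℝ) := by linarith
  have h1 : ((f n : ℤ):ℝ) < (x:ℝ) + n * ((2*p-1)/(m:ℝ) + 1/((j:ℝ)+1)) :=
    lt_of_not_ge (hN1 n hn1)
  have h2 : (x:ℝ) + n * ((2*p-1)/(m:ℝ) - 1/((j:ℝ)+1)) < ((f n : ℤ):ℝ) :=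
    lt_of_not_ge (hN2 n hn2)
  have hN3R : (N3:ℝ) ≤ (n:ℝ) := by exact_mod_cast hn3
  have hxn : |(x:ℝ)| < ε/2 * n := by
    rw [div_lt_iff₀ hε] at hN3
    nlinarith
  rw [Real.dist_eq]
  have e : ((f n : ℤ):ℝ)/(n:ℝ) - (2*p-1)/(m:ℝ) = (((f n : ℤ):ℝ) - n*((2*p-1)/(m:ℝ)))/(n:ℝ) := by
    field_simp
  rw [e, abs_div, abs_of_pos hnpos, div_lt_iff₀ hnpos]
  have hnum : |((f n : ℤ):ℝ) - n*((2*p-1)/(m:ℝ))| < n * (1/((j:ℝ)+1)) + |(x:ℝ)| := by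
    rw [abs_lt]
    constructor
    · nlinarith [neg_abs_le (x:ℝ)]
    · nlinarith [le_abs_self (x:ℝ)]
  nlinarith [hjε, hxn, hnpos]

end
end
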